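/- Let Λ > 0 and Δ > 0, suppose 𝒳 = {x^0, x^1, …, x^p} ⊂ B(x^0, Δ) is Λ-poised in B(x^0, Δ) in the minimum Frobenius norm sense. Let f be continuously differentiable on an open set Ω ⊇ B(x^0, Δ) with ∇f Lipschitz continuous on Ω with constant L. Let f̃(x^i) = f(x^i) + e_i with ε_i = |e_i| for i = 0, …, p, and let m be the MFN interpolation model with data (f̃(x^0), …, f̃(x^p)). Then ‖∇²m(x^0)‖ ≤ 4(p+1) Λ L √((d+1)(d+2)) / ν(Δ) + (8Λ√((d+1)(d+2)) / (Δ² ν(Δ))) Σ_{i=0}^p ε_i, where ν(Δ) = min{1, 1/Δ, 1/Δ²}. -/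

import Mathlib

noncomputable section

open scoped RealInnerProductSpace
open Matrix

/-- Index type for the degree-two monomials `x_i x_j` with `i ≤ j`;
it has cardinality `d(d+1)/2`. -/
abbrev QIdx (d : ℕ) := {ij : Fin d × Fin d // ij.1 ≤ ij.2}

/-- The vector `μ(y) = (1, y_1, …, y_d)` of degree-zero and degree-one monomials. -/
def muVec {d : ℕ} (y : EuclideanSpace ℝ (Fin d)) : Fin (d + 1) → ℝ :=
  Fin.cons 1 fun j => y j

/-- The vector `ν(y)` of degree-two monomials `y_i y_j`, `i ≤ j`. -/
def nuVec {d : ℕ} (y : EuclideanSpace ℝ (Fin d)) : QIdx d → ℝ :=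
  fun ij => y ij.1.1 * y ij.1.2

/-- The matrix `M` with `M_{ij} = μ_i(x^j)`. -/
def Mmat {d p : ℕ} (x : Fin (p + 1) → EuclideanSpace ℝ (Fin d)) :
    Matrix (Fin (d + 1)) (Fin (p + 1)) ℝ :=
  Matrix.of fun i j => muVec (x j) i

/-- The matrix `N` with `N_{ij} = ν_i(x^j)`. -/
def Nmat {d p : ℕ} (x : Fin (p + 1) → EuclideanSpace ℝ (Fin d)) :
    Matrix (QIdx d) (Fin (p + 1)) ℝ :=
  Matrix.of fun i j => nuVec (x j) i

/-- The KKT matrix `W = [[NᵀN, Mᵀ], [M, 0]]`. -/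
def Wmat {d p : ℕ} (x : Fin (p + 1) → EuclideanSpace ℝ (Fin d)) :
    Matrix (Fin (p + 1) ⊕ Fin (d + 1)) (Fin (p + 1) ⊕ Fin (d + 1)) ℝ :=
  Matrix.fromBlocks ((Nmat x)ᵀ * Nmat x) (Mmat x)ᵀ (Mmat x) 0

/-- `𝒳` is poised in the minimum Frobenius norm sense: the KKT matrix `W` is nonsingular. -/
def MFNPoised {d p : ℕ} (x : Fin (p + 1) → EuclideanSpace ℝ (Fin d)) : Prop :=
  IsUnit (Wmat x).det

/-- The quadratic polynomial `m(y) = αᵀμ(y) + βᵀν(y)` with coefficients `(α, β)`. -/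
def modelFun {d : ℕ} (a : Fin (d + 1) → ℝ) (b : QIdx d → ℝ)
    (y : EuclideanSpace ℝ (Fin d)) : ℝ :=
  (∑ i, a i * muVec y i) + ∑ ij, b ij * nuVec y ij

/-- `(α, β)` solves the minimum Frobenius norm interpolation problem for the data `v`:
it satisfies the interpolation constraints `Mᵀα + Nᵀβ = v` and minimizes `(1/2)‖β‖²`
among all coefficient pairs satisfying the constraints. -/
def IsMFNSol {d p : ℕ} (x : Fin (p + 1) → EuclideanSpace ℝ (Fin d))
    (v : Fin (p + 1) → ℝ) (a : Fin (d + 1) → ℝ) (b : QIdx d → ℝ) : Prop :=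
  (Mmat x)ᵀ.mulVec a + (Nmat x)ᵀ.mulVec b = v ∧
    ∀ (a' : Fin (d + 1) → ℝ) (b' : QIdx d → ℝ),
      (Mmat x)ᵀ.mulVec a' + (Nmat x)ᵀ.mulVec b' = v →
      ∑ ij, (b ij) ^ 2 ≤ ∑ ij, (b' ij) ^ 2

/-- The operator 2-norm of a real matrix. -/
noncomputable def opNorm2 {ι κ : Type*} [Fintype ι] [Fintype κ] [DecidableEq κ]
    (M : Matrix ι κ ℝ) : ℝ :=
  ‖(Matrix.toEuclideanLin M).toContinuousLinearMap‖

/-- The Hessian matrix of the quadratic polynomial `y ↦ αᵀμ(y) + βᵀν(y)`: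
its `(j,k)` entry is `β_{jk}` for `j ≠ k` and `2β_{jj}` on the diagonal. -/
def hessOf {d : ℕ} (b : QIdx d → ℝ) : Matrix (Fin d) (Fin d) ℝ :=
  Matrix.of fun j k =>
    if h : j < k then b ⟨(j, k), le_of_lt h⟩
    else if h' : k < j then b ⟨(k, j), le_of_lt h'⟩
    else 2 * b ⟨(j, j), le_refl j⟩

/-! Subtracting from the data the values of the first-order Taylor polynomial of `f` at `x 0`
does not change the MFN coefficient `β`, because affine data lie in the range of `Mᵀ`. By
linearity `β` is then `∑ rᵢ βᵢ`, where `βᵢ` belongs to the Lagrange polynomial `ℓᵢ` and the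
residuals satisfy `|rᵢ| ≤ LΔ² + εᵢ` by the mean value inequality. The polarized second difference
`m(y+u+v) + m(y-u-v) - m(y+u-v) - m(y-u+v) = 4 uᵀ∇²m v` at `u = (Δ/2)eⱼ`, `v = (Δ/2)eₖ` bounds
every entry of `∇²ℓᵢ` by `4Λ/Δ²`, and the operator norm of a `d × d` matrix is at most `d` times
its largest entry. The stated bound is weaker, as `d ≤ √((d+1)(d+2))` and `ν ≤ 1`.
-/

section MFN

variable {d p : ℕ} {x : Fin (p + 1) → EuclideanSpace ℝ (Fin d)}

theorem IsMFNSol.dotProduct_eq_zero {v : Fin (p + 1) → ℝ} {a : Fin (d + 1) → ℝ}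
    {b : QIdx d → ℝ} (h : IsMFNSol x v a b) {a₀ : Fin (d + 1) → ℝ} {b₀ : QIdx d → ℝ}
    (h₀ : (Mmat x)ᵀ *ᵥ a₀ + (Nmat x)ᵀ *ᵥ b₀ = 0) : b ⬝ᵥ b₀ = 0 := by
  have hquad : ∀ t : ℝ, 0 ≤ (b₀ ⬝ᵥ b₀) * (t * t) + (2 * (b ⬝ᵥ b₀)) * t + 0 := by
    intro t
    have hfeas : (Mmat x)ᵀ *ᵥ (a + t • a₀) + (Nmat x)ᵀ *ᵥ (b + t • b₀) = v := by
      rw [mulVec_add, mulVec_add, mulVec_smul, mulVec_smul, ← h.1, add_add_add_comm,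
        ← smul_add, h₀, smul_zero, add_zero]
    have hmin := h.2 _ _ hfeas
    simp only [Pi.add_apply, Pi.smul_apply, smul_eq_mul, dotProduct] at hmin ⊢
    have : ∑ ij, (b ij + t * b₀ ij) ^ 2 = ∑ ij, b ij ^ 2 +
        (∑ ij, b₀ ij * b₀ ij) * (t * t) + 2 * (∑ ij, b ij * b₀ ij) * t := by
      simp only [Finset.sum_mul, Finset.mul_sum, ← Finset.sum_add_distrib]
      exact Finset.sum_congr rfl fun _ _ => by ring
    linarith
  have := discrim_le_zero hquad
  rw [discrim] at this
  nlinarith [sq_nonneg (b ⬝ᵥ b₀)]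

theorem isMFNSol_of_dotProduct_eq_zero {v : Fin (p + 1) → ℝ} {a : Fin (d + 1) → ℝ}
    {b : QIdx d → ℝ} (hfeas : (Mmat x)ᵀ *ᵥ a + (Nmat x)ᵀ *ᵥ b = v)
    (horth : ∀ (a₀ : Fin (d + 1) → ℝ) (b₀ : QIdx d → ℝ),
      (Mmat x)ᵀ *ᵥ a₀ + (Nmat x)ᵀ *ᵥ b₀ = 0 → b ⬝ᵥ b₀ = 0) :
    IsMFNSol x v a b := by
  refine ⟨hfeas, fun a' b' hfeas' => ?_⟩
  have hker : (Mmat x)ᵀ *ᵥ (a' - a) + (Nmat x)ᵀ *ᵥ (b' - b) = 0 := by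
    rw [mulVec_sub, mulVec_sub, sub_add_sub_comm, hfeas', hfeas, sub_self]
  have hpyth : b' ⬝ᵥ b' = b ⬝ᵥ b + (b' - b) ⬝ᵥ (b' - b) := by
    have := horth _ _ hker
    simp only [dotProduct_sub, sub_dotProduct, dotProduct_comm b' b] at this ⊢
    linarith
  have hnonneg : 0 ≤ (b' - b) ⬝ᵥ (b' - b) := Finset.sum_nonneg fun _ _ => mul_self_nonneg _
  simp only [dotProduct, ← sq] at hpyth hnonneg
  linarith

theorem IsMFNSol.unique {v : Fin (p + 1) → ℝ} {a a' : Fin (d + 1) → ℝ} {b b' : QIdx d → ℝ}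
    (h : IsMFNSol x v a b) (h' : IsMFNSol x v a' b') : b = b' := by
  have hker : (Mmat x)ᵀ *ᵥ (a - a') + (Nmat x)ᵀ *ᵥ (b - b') = 0 := by
    rw [mulVec_sub, mulVec_sub, sub_add_sub_comm, h.1, h'.1, sub_self]
  have hzero : (b - b') ⬝ᵥ (b - b') = 0 := by
    rw [sub_dotProduct, h.dotProduct_eq_zero hker, h'.dotProduct_eq_zero hker, sub_self]
  exact sub_eq_zero.mp (dotProduct_self_eq_zero.mp hzero)

theorem isMFNSol_sum_smul {la : Fin (p + 1) → Fin (d + 1) → ℝ} {lb : Fin (p + 1) → QIdx d → ℝ}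
    (hl : ∀ i, IsMFNSol x (Pi.single i 1) (la i) (lb i)) (v : Fin (p + 1) → ℝ) :
    IsMFNSol x v (∑ i, v i • la i) (∑ i, v i • lb i) := by
  refine isMFNSol_of_dotProduct_eq_zero ?_ fun a₀ b₀ h₀ => ?_
  · simp only [mulVec_sum, mulVec_smul, ← Finset.sum_add_distrib, ← smul_add, (hl _).1]
    ext j
    simp [Pi.single_apply]
  · simp only [sum_dotProduct, smul_dotProduct, (hl _).dotProduct_eq_zero h₀, smul_zero,
      Finset.sum_const_zero]

theorem IsMFNSol.eq_sum_smul_sub {la : Fin (p + 1) → Fin (d + 1) → ℝ}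
    {lb : Fin (p + 1) → QIdx d → ℝ} (hl : ∀ i, IsMFNSol x (Pi.single i 1) (la i) (lb i))
    {v : Fin (p + 1) → ℝ} {a : Fin (d + 1) → ℝ} {b : QIdx d → ℝ} (h : IsMFNSol x v a b)
    (a₀ : Fin (d + 1) → ℝ) : b = ∑ i, (v - (Mmat x)ᵀ *ᵥ a₀) i • lb i := by
  have hsub : IsMFNSol x (v - (Mmat x)ᵀ *ᵥ a₀) (a - a₀) b := by
    refine isMFNSol_of_dotProduct_eq_zero ?_ fun _ _ => h.dotProduct_eq_zero
    rw [mulVec_sub, ← h.1]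
    abel
  exact hsub.unique (isMFNSol_sum_smul hl _)

theorem Mmat_transpose_mulVec_cons (x : Fin (p + 1) → EuclideanSpace ℝ (Fin d)) (c : ℝ)
    (g : EuclideanSpace ℝ (Fin d)) :
    (Mmat x)ᵀ *ᵥ Fin.cons c (fun j => g j) = fun i => c + ⟪g, x i⟫ := by
  ext i
  simp [Mmat, mulVec, dotProduct, muVec, Fin.sum_univ_succ, PiLp.inner_apply, mul_comm]

end MFN

section Hessian

variable {d : ℕ}

/-- `uᵀ (hessOf b) v`, written in the coefficients `b`. -/
def hessForm (b : QIdx d → ℝ) (u v : EuclideanSpace ℝ (Fin d)) : ℝ :=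
  ∑ ij, b ij * (u ij.1.1 * v ij.1.2 + v ij.1.1 * u ij.1.2)

theorem modelFun_polarization (a : Fin (d + 1) → ℝ) (b : QIdx d → ℝ)
    (y u v : EuclideanSpace ℝ (Fin d)) :
    modelFun a b (y + (u + v)) + modelFun a b (y - (u + v))
      - modelFun a b (y + (u - v)) - modelFun a b (y - (u - v)) = 4 * hessForm b u v := by
  have hmu : ∀ i, muVec (y + (u + v)) i + muVec (y - (u + v)) i
      - muVec (y + (u - v)) i - muVec (y - (u - v)) i = 0 := by
    refine Fin.cases ?_ fun j => ?_
    · simp [muVec]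
    · simp only [muVec, Fin.cons_succ, PiLp.add_apply, PiLp.sub_apply]; ring
  have hnu : ∀ ij, nuVec (y + (u + v)) ij + nuVec (y - (u + v)) ij
      - nuVec (y + (u - v)) ij - nuVec (y - (u - v)) ij
      = 4 * (u ij.1.1 * v ij.1.2 + v ij.1.1 * u ij.1.2) := by
    intro ij
    simp only [nuVec, PiLp.add_apply, PiLp.sub_apply]; ring
  calc _ = ∑ i, a i * (muVec (y + (u + v)) i + muVec (y - (u + v)) i
          - muVec (y + (u - v)) i - muVec (y - (u - v)) i)
        + ∑ ij, b ij * (nuVec (y + (u + v)) ij + nuVec (y - (u + v)) ij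
          - nuVec (y + (u - v)) ij - nuVec (y - (u - v)) ij) := by
        simp only [modelFun, mul_add, mul_sub, Finset.sum_add_distrib, Finset.sum_sub_distrib]
        ring
    _ = 4 * hessForm b u v := by
        simp only [hmu, hnu, mul_zero, Finset.sum_const_zero, zero_add, hessForm,
          Finset.mul_sum]
        exact Finset.sum_congr rfl fun _ _ => by ring

theorem hessForm_single_single (b : QIdx d → ℝ) (j k : Fin d) (s t : ℝ) :
    hessForm b (EuclideanSpace.single j s) (EuclideanSpace.single k t)
      = s * t * hessOf b j k := by
  have hvanish : ∀ q : QIdx d, ∀ ij : QIdx d, ij ≠ q → (ij.1.1 = j ∧ ij.1.2 = k ∨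
      ij.1.1 = k ∧ ij.1.2 = j → ij = q) → b ij * ((EuclideanSpace.single j s) ij.1.1 *
        (EuclideanSpace.single k t) ij.1.2 + (EuclideanSpace.single k t) ij.1.1 *
        (EuclideanSpace.single j s) ij.1.2) = 0 := by
    rintro q ⟨⟨i₁, i₂⟩, hi⟩ hne hq
    simp only [PiLp.single_apply]
    split_ifs <;> simp_all
  rcases lt_trichotomy j k with hjk | rfl | hkj
  · rw [hessForm, Finset.sum_eq_single ⟨(j, k), hjk.le⟩]
    · simp [hessOf, hjk, hjk.ne, hjk.ne']; ring
    · refine fun ij _ hne => hvanish _ ij hne ?_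
      rintro (⟨h₁, h₂⟩ | ⟨h₁, h₂⟩)
      · exact Subtype.ext (Prod.ext h₁ h₂)
      · exact absurd (h₁ ▸ h₂ ▸ ij.2) hjk.not_ge
    · simp
  · rw [hessForm, Finset.sum_eq_single ⟨(j, j), le_rfl⟩]
    · simp [hessOf]; ring
    · refine fun ij _ hne => hvanish _ ij hne ?_
      rintro (⟨h₁, h₂⟩ | ⟨h₁, h₂⟩) <;> exact Subtype.ext (Prod.ext h₁ h₂)
    · simp
  · rw [hessForm, Finset.sum_eq_single ⟨(k, j), hkj.le⟩]
    · simp [hessOf, hkj, hkj.ne, hkj.ne', hkj.not_gt]; ring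
    · refine fun ij _ hne => hvanish _ ij hne ?_
      rintro (⟨h₁, h₂⟩ | ⟨h₁, h₂⟩)
      · exact absurd (h₁ ▸ h₂ ▸ ij.2) hkj.not_ge
      · exact Subtype.ext (Prod.ext h₁ h₂)
    · simp

theorem abs_hessOf_apply_le {a : Fin (d + 1) → ℝ} {b : QIdx d → ℝ}
    {y : EuclideanSpace ℝ (Fin d)} {Δ Λ : ℝ} (hΔ : 0 < Δ)
    (hm : ∀ z ∈ Metric.closedBall y Δ, |modelFun a b z| ≤ Λ) (j k : Fin d) :
    |hessOf b j k| ≤ 4 * Λ / Δ ^ 2 := by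
  set u := EuclideanSpace.single j (Δ / 2)
  set v := EuclideanSpace.single k (Δ / 2)
  have hu : ‖u‖ = Δ / 2 := by simp [u, abs_of_pos hΔ]
  have hv : ‖v‖ = Δ / 2 := by simp [v, abs_of_pos hΔ]
  have hm' : ∀ w, ‖w‖ ≤ Δ → |modelFun a b (y + w)| ≤ Λ ∧ |modelFun a b (y - w)| ≤ Λ :=
    fun w hw => ⟨hm _ (by simpa using hw), hm _ (by simpa using hw)⟩
  obtain ⟨h₁, h₂⟩ := hm' (u + v) ((norm_add_le u v).trans (by linarith))
  obtain ⟨h₃, h₄⟩ := hm' (u - v) ((norm_sub_le u v).trans (by linarith))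
  have hpol := modelFun_polarization a b y u v
  rw [hessForm_single_single] at hpol
  rw [abs_le] at h₁ h₂ h₃ h₄
  have hΔH : |Δ ^ 2 * hessOf b j k| ≤ 4 * Λ := abs_le.mpr ⟨by nlinarith, by nlinarith⟩
  rwa [abs_mul, abs_of_pos (by positivity), ← le_div_iff₀' (by positivity)] at hΔH

theorem hessOf_sum_smul {ι : Type*} (s : Finset ι) (c : ι → ℝ) (B : ι → QIdx d → ℝ) :
    hessOf (∑ i ∈ s, c i • B i) = ∑ i ∈ s, c i • hessOf (B i) := by
  ext j k
  simp only [hessOf, Matrix.sum_apply, Matrix.smul_apply, Matrix.of_apply, Finset.sum_apply,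
    Pi.smul_apply, smul_eq_mul]
  split_ifs <;> simp [Finset.mul_sum, mul_left_comm]

end Hessian

theorem opNorm2_le_sqrt_sum_sq {ι κ : Type*} [Fintype ι] [Fintype κ] [DecidableEq κ]
    (M : Matrix ι κ ℝ) : opNorm2 M ≤ √(∑ i, ∑ j, M i j ^ 2) := by
  refine ContinuousLinearMap.opNorm_le_bound _ (Real.sqrt_nonneg _) fun w => ?_
  rw [LinearMap.coe_toContinuousLinearMap', ← pow_le_pow_iff_left₀ (norm_nonneg _)
    (by positivity) two_ne_zero, mul_pow, Real.sq_sqrt (by positivity),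
    EuclideanSpace.norm_sq_eq, EuclideanSpace.norm_sq_eq, Finset.sum_mul]
  refine Finset.sum_le_sum fun i _ => ?_
  simp only [Matrix.ofLp_toLpLin, Matrix.toLin'_apply, Real.norm_eq_abs, sq_abs]
  exact Finset.sum_mul_sq_le_sq_mul_sq _ _ _

theorem opNorm2_le_card_mul {n : ℕ} {M : Matrix (Fin n) (Fin n) ℝ} {C : ℝ} (hC : 0 ≤ C)
    (hM : ∀ i j, |M i j| ≤ C) : opNorm2 M ≤ n * C := by
  refine (opNorm2_le_sqrt_sum_sq M).trans (Real.sqrt_le_iff.mpr ⟨by positivity, ?_⟩)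
  calc ∑ i, ∑ j, M i j ^ 2 ≤ ∑ _i : Fin n, ∑ _j : Fin n, C ^ 2 := by
        refine Finset.sum_le_sum fun i _ => Finset.sum_le_sum fun j _ => ?_
        exact sq_le_sq' (abs_le.mp (hM i j)).1 (abs_le.mp (hM i j)).2
    _ = (n * C) ^ 2 := by simp; ring

theorem abs_sub_sub_inner_gradient_le {E : Type*} [NormedAddCommGroup E] [InnerProductSpace ℝ E]
    [CompleteSpace E] {f : E → ℝ} {s : Set E} (hs : Convex ℝ s)
    (hf : ∀ z ∈ s, DifferentiableAt ℝ f z) {x y : E} (hx : x ∈ s) (hy : y ∈ s) {C : ℝ}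
    (hC : ∀ z ∈ s, ‖gradient f z - gradient f x‖ ≤ C) :
    |f y - f x - ⟪gradient f x, y - x⟫| ≤ C * ‖y - x‖ := by
  let toDual := InnerProductSpace.toDual ℝ E
  have hderiv : ∀ z ∈ s, HasFDerivWithinAt (fun w => f w - toDual (gradient f x) w)
      (toDual (gradient f z - gradient f x) : E →L[ℝ] ℝ) s z := fun z hz => by
    rw [map_sub]
    exact ((hf z hz).hasGradientAt.hasFDerivAt.sub
      (toDual (gradient f x)).hasFDerivAt).hasFDerivWithinAt
  have hbound : ∀ z ∈ s, ‖(toDual (gradient f z - gradient f x) : E →L[ℝ] ℝ)‖ ≤ C :=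
    fun z hz => (LinearIsometryEquiv.norm_map _ _).trans_le (hC z hz)
  have := hs.norm_image_sub_le_of_norm_hasFDerivWithin_le hderiv hbound hx hy
  have hF : f y - toDual (gradient f x) y - (f x - toDual (gradient f x) x)
      = f y - f x - ⟪gradient f x, y - x⟫ := by
    simp only [toDual, InnerProductSpace.toDual_apply_apply, inner_sub_right]
    ring
  rwa [hF, Real.norm_eq_abs] at this

theorem abs_sub_sub_inner_gradient_le_of_lipschitz {E : Type*} [NormedAddCommGroup E]
    [InnerProductSpace ℝ E] [CompleteSpace E] {f : E → ℝ} {x₀ y : E} {r L : ℝ} (hL : 0 ≤ L)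
    (hf : ∀ z ∈ Metric.closedBall x₀ r, DifferentiableAt ℝ f z)
    (hlip : ∀ z ∈ Metric.closedBall x₀ r, ‖gradient f z - gradient f x₀‖ ≤ L * ‖z - x₀‖)
    (hy : y ∈ Metric.closedBall x₀ r) :
    |f y - f x₀ - ⟪gradient f x₀, y - x₀⟫| ≤ L * r ^ 2 := by
  have hyr : ‖y - x₀‖ ≤ r := mem_closedBall_iff_norm.mp hy
  have hC : ∀ z ∈ Metric.closedBall x₀ r, ‖gradient f z - gradient f x₀‖ ≤ L * r := fun z hz =>
    (hlip z hz).trans (mul_le_mul_of_nonneg_left (mem_closedBall_iff_norm.mp hz) hL)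
  calc _ ≤ L * r * ‖y - x₀‖ := abs_sub_sub_inner_gradient_le (convex_closedBall x₀ r) hf
        (Metric.mem_closedBall_self ((norm_nonneg _).trans hyr)) hy hC
    _ ≤ L * r * r := mul_le_mul_of_nonneg_left hyr (mul_nonneg hL ((norm_nonneg _).trans hyr))
    _ = L * r ^ 2 := by ring

theorem card_mul_sum_le_hessian_bound {d p : ℕ} {Λ L Δ ν : ℝ} (hΛ : 0 ≤ Λ) (hL : 0 ≤ L)
    (hΔ : 0 < Δ) (hν : 0 < ν) (hν1 : ν ≤ 1) {ε : Fin (p + 1) → ℝ} (hε : ∀ i, 0 ≤ ε i) :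
    d * ∑ i, (L * Δ ^ 2 + ε i) * (4 * Λ / Δ ^ 2) ≤
      4 * (p + 1) * Λ * L * √((d + 1) * (d + 2)) / ν
        + (8 * Λ * √((d + 1) * (d + 2)) / (Δ ^ 2 * ν)) * ∑ i, ε i := by
  have hd : (d : ℝ) ≤ √((d + 1) * (d + 2)) := Real.le_sqrt_of_sq_le (by nlinarith)
  have hsum : 0 ≤ ∑ i, ε i := Finset.sum_nonneg fun i _ => hε i
  have hexpand : d * ∑ i, (L * Δ ^ 2 + ε i) * (4 * Λ / Δ ^ 2)
      = 4 * (p + 1) * Λ * L * d + (4 * Λ * d / Δ ^ 2) * ∑ i, ε i := by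
    simp only [← Finset.sum_mul, Finset.sum_add_distrib, Finset.sum_const, Finset.card_univ,
      Fintype.card_fin, nsmul_eq_mul]
    field_simp
    push_cast
    ring
  rw [hexpand]
  gcongr
  · calc 4 * (p + 1) * Λ * L * d ≤ 4 * (p + 1) * Λ * L * √((d + 1) * (d + 2)) := by gcongr
      _ ≤ _ := le_div_self (by positivity) hν hν1
  · norm_num
  · exact mul_le_of_le_one_right (by positivity) hν1

theorem mfn_model_hessian_bound_general
    {d p : ℕ}
    (x : Fin (p + 1) → EuclideanSpace ℝ (Fin d))
    (Δ : ℝ) (hΔ : 0 < Δ)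
    (hx : ∀ i, x i ∈ Metric.closedBall (x 0) Δ)
    (Λ : ℝ) (hΛ : 0 < Λ)
    (la : Fin (p + 1) → Fin (d + 1) → ℝ) (lb : Fin (p + 1) → QIdx d → ℝ)
    (hlagrange : ∀ i, IsMFNSol x (Pi.single i 1) (la i) (lb i))
    (hlampoised : ∀ i, ∀ y ∈ Metric.closedBall (x 0) Δ, |modelFun (la i) (lb i) y| ≤ Λ)
    (f : EuclideanSpace ℝ (Fin d) → ℝ)
    (Ω : Set (EuclideanSpace ℝ (Fin d))) (hΩ : IsOpen Ω)
    (hBΩ : Metric.closedBall (x 0) Δ ⊆ Ω)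
    (hf : ContDiffOn ℝ 1 f Ω)
    (L : ℝ) (hL : 0 ≤ L)
    (hlip : ∀ u ∈ Ω, ∀ v ∈ Ω, ‖gradient f u - gradient f v‖ ≤ L * ‖u - v‖)
    (e : Fin (p + 1) → ℝ) (ε : Fin (p + 1) → ℝ) (hε : ∀ i, ε i = |e i|)
    (a : Fin (d + 1) → ℝ) (b : QIdx d → ℝ)
    (hmodel : IsMFNSol x (fun i => f (x i) + e i) a b)
    (ν : ℝ) (hν : ν = min (min 1 (1 / Δ)) (1 / Δ ^ 2)) :
    opNorm2 (hessOf b) ≤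
      4 * (p + 1) * Λ * L * Real.sqrt ((d + 1) * (d + 2)) / ν
        + (8 * Λ * Real.sqrt ((d + 1) * (d + 2)) / (Δ ^ 2 * ν)) * ∑ i, ε i := by
  set g := gradient f (x 0)
  -- the residual of the data against the first-order Taylor polynomial of `f` at `x 0`
  set r := (fun i => f (x i) + e i) - (Mmat x)ᵀ *ᵥ Fin.cons (f (x 0) - ⟪g, x 0⟫) (fun j => g j)
  have hb : b = ∑ i, r i • lb i := hmodel.eq_sum_smul_sub hlagrange _
  have hr : ∀ i, |r i| ≤ L * Δ ^ 2 + ε i := fun i => by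
    have hri : r i = (f (x i) - f (x 0) - ⟪g, x i - x 0⟫) + e i := by
      simp only [r, Pi.sub_apply, Mmat_transpose_mulVec_cons, inner_sub_right]
      ring
    rw [hri, hε]
    refine (abs_add_le _ _).trans (add_le_add_left ?_ _)
    exact abs_sub_sub_inner_gradient_le_of_lipschitz hL
      (fun z hz => (hf.differentiableOn one_ne_zero).differentiableAt (hΩ.mem_nhds (hBΩ hz)))
      (fun z hz => hlip z (hBΩ hz) (x 0) (hBΩ (Metric.mem_closedBall_self hΔ.le))) (hx i)
  have hentry : ∀ j k, |hessOf b j k| ≤ ∑ i, (L * Δ ^ 2 + ε i) * (4 * Λ / Δ ^ 2) := by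
    intro j k
    rw [hb, hessOf_sum_smul, Matrix.sum_apply]
    refine (Finset.abs_sum_le_sum_abs _ _).trans (Finset.sum_le_sum fun i _ => ?_)
    rw [Matrix.smul_apply, smul_eq_mul, abs_mul]
    exact mul_le_mul (hr i) (abs_hessOf_apply_le hΔ (hlampoised i) j k) (abs_nonneg _)
      ((abs_nonneg _).trans (hr i))
  have hε₀ : ∀ i, 0 ≤ ε i := fun i => hε i ▸ abs_nonneg _
  have hν₀ : 0 < ν := hν ▸ lt_min (lt_min one_pos (by positivity)) (by positivity)
  have hν₁ : ν ≤ 1 := hν ▸ (min_le_left _ _).trans (min_le_left _ _)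
  calc opNorm2 (hessOf b) ≤ d * ∑ i, (L * Δ ^ 2 + ε i) * (4 * Λ / Δ ^ 2) :=
        opNorm2_le_card_mul
          (Finset.sum_nonneg fun i _ => by have := hε₀ i; positivity) hentry
    _ ≤ _ := card_mul_sum_le_hessian_bound hΛ.le hL hΔ hν₀ hν₁ hε₀

/-- Bound on the Hessian of the minimum Frobenius norm interpolation model
of noisy function values, for a `Λ`-poised interpolation set. -/
theorem mfn_model_hessian_bound
    {d p : ℕ} (hd : 1 ≤ d) (hdp : d ≤ p) (hcard : p + 1 ≤ (d + 1) * (d + 2) / 2)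
    (x : Fin (p + 1) → EuclideanSpace ℝ (Fin d))
    (hxinj : Function.Injective x)
    (hpoised : MFNPoised x)
    (Δ : ℝ) (hΔ : 0 < Δ)
    (hx : ∀ i, x i ∈ Metric.closedBall (x 0) Δ)
    (Λ : ℝ) (hΛ : 0 < Λ)
    (la : Fin (p + 1) → Fin (d + 1) → ℝ) (lb : Fin (p + 1) → QIdx d → ℝ)
    (hlagrange : ∀ i, IsMFNSol x (Pi.single i 1) (la i) (lb i))
    (hlampoised : ∀ i, ∀ y ∈ Metric.closedBall (x 0) Δ, |modelFun (la i) (lb i) y| ≤ Λ)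
    (f : EuclideanSpace ℝ (Fin d) → ℝ)
    (Ω : Set (EuclideanSpace ℝ (Fin d))) (hΩ : IsOpen Ω)
    (hBΩ : Metric.closedBall (x 0) Δ ⊆ Ω)
    (hf : ContDiffOn ℝ 1 f Ω)
    (L : ℝ) (hL : 0 ≤ L)
    (hlip : ∀ u ∈ Ω, ∀ v ∈ Ω, ‖gradient f u - gradient f v‖ ≤ L * ‖u - v‖)
    (e : Fin (p + 1) → ℝ) (ε : Fin (p + 1) → ℝ) (hε : ∀ i, ε i = |e i|)
    (a : Fin (d + 1) → ℝ) (b : QIdx d → ℝ)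
    (hmodel : IsMFNSol x (fun i => f (x i) + e i) a b)
    (ν : ℝ) (hν : ν = min (min 1 (1 / Δ)) (1 / Δ ^ 2)) :
    opNorm2 (hessOf b) ≤
      4 * (p + 1) * Λ * L * Real.sqrt ((d + 1) * (d + 2)) / ν
        + (8 * Λ * Real.sqrt ((d + 1) * (d + 2)) / (Δ ^ 2 * ν)) * ∑ i, ε i :=
  mfn_model_hessian_bound_general x Δ hΔ hx Λ hΛ la lb hlagrange hlampoised f Ω hΩ hBΩ hf L hL hlip
    e ε hε a b hmodel ν hν

end
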